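/- Let L > 1, A > 0, K > 0, and let y : [0, K] → [0, ∞) be a nonincreasing, locally absolutely continuous function with y(k) > 0 for 0 ≤ k < K and y(k) ≤ A · (−y′(k))^L for almost every k ∈ (0, K). Then K ≤ (L/(L−1)) · A^{1/L} · y(0)^{(L−1)/L}. -/

import Mathlib

/-!
Put `α = (L - 1) / L`. Formally `z = y ^ α` satisfies
`z' = -α y ^ (-1/L) (-y') ≤ -α A ^ (-1/L)`, since the ODE inequality says
`(y / A) ^ (1/L) ≤ -y'`; hence `α A ^ (-1/L) K ≤ z 0 - z K ≤ z 0`.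
As `y` is merely a primitive, the chain rule is replaced by the concavity of `s ↦ s ^ α` applied
to the integrated inequality `(t - s) (y t / A) ^ (1/L) ≤ y s - y t`: this bounds the right
difference quotients of `z` by `-α (y t / A) ^ (1/L) / y s ^ (1/L)`, which tends to
`-α A ^ (-1/L)` by continuity of `y`, and a fencing argument integrates the bound.
-/

open MeasureTheory Set intervalIntegral Filter Topology

lemma Real.mul_rpow_sub_one_mul_sub_le_rpow_sub_rpow {p u v : ℝ} (hp0 : 0 ≤ p) (hp1 : p ≤ 1)
    (hu : 0 < u) (hv : 0 ≤ v) : p * u ^ (p - 1) * (u - v) ≤ u ^ p - v ^ p := by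
  have hb := rpow_one_add_le_one_add_mul_self (s := v / u - 1) (by
    have := div_nonneg hv hu.le; linarith) hp0 hp1
  rw [add_sub_cancel, Real.div_rpow hv hu.le, div_le_iff₀ (by positivity)] at hb
  have hsub : u ^ (p - 1) * u = u ^ p := by rw [← Real.rpow_add_one hu.ne', sub_add_cancel]
  have hdiv : u ^ p * (v / u) = u ^ (p - 1) * v := by
    rw [← hsub]; field_simp
  nlinarith [hdiv, hsub]

lemma Real.rpow_one_div_le_of_le_mul_rpow {A L u x : ℝ} (hA : 0 < A) (hL : 0 < L) (hu : 0 ≤ u)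
    (hx : 0 ≤ x) (h : u ≤ A * x ^ L) : (u / A) ^ (1 / L) ≤ x := calc
  (u / A) ^ (1 / L) ≤ (x ^ L) ^ (1 / L) := by
    gcongr
    rwa [div_le_iff₀' hA]
  _ = x := by rw [← Real.rpow_mul hx, mul_one_div_cancel hL.ne', Real.rpow_one]

lemma mul_sub_le_sub_of_forall_eventually_slope_lt {f : ℝ → ℝ} {a b c : ℝ} (hab : a ≤ b)
    (hf : ContinuousOn f (Icc a b))
    (hslope : ∀ x ∈ Ico a b, ∀ r, -c < r → ∀ᶠ t in 𝓝[>] x, slope f x t < r) :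
    c * (b - a) ≤ f a - f b := by
  have := image_le_of_liminf_slope_right_le_deriv_boundary hf (B := fun x => f a - c * (x - a))
    (B' := fun _ => -c) (by simp) (by fun_prop)
    (fun x _ => by
      simpa using (((hasDerivWithinAt_id x (Ici x)).sub_const a).const_mul c).const_sub (f a))
    (fun x hx r hr => (hslope x hx r hr).frequently) (right_mem_Icc.2 hab)
  linarith

section Primitive

variable {y y' : ℝ → ℝ} {a b : ℝ}

lemma continuousOn_of_eq_add_integral (hab : a ≤ b) (hint : IntegrableOn y' (Icc a b))
    (hftc : ∀ k ∈ Icc a b, y k = y a + ∫ t in a..k, y' t) : ContinuousOn y (Icc a b) := by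
  have h := continuousOn_primitive_interval (a := a) (b := b) (μ := volume) (f := y')
  rw [uIcc_of_le hab] at h
  exact (continuousOn_const.add (h hint)).congr hftc

lemma sub_eq_integral_of_eq_add_integral (hint : IntegrableOn y' (Icc a b))
    (hftc : ∀ k ∈ Icc a b, y k = y a + ∫ t in a..k, y' t) {s t : ℝ} (hs : s ∈ Icc a b)
    (ht : t ∈ Icc a b) : y t - y s = ∫ u in s..t, y' u := by
  have hii : ∀ k ∈ Icc a b, IntervalIntegrable y' volume a k := fun k hk =>
    (intervalIntegrable_iff_integrableOn_Icc_of_le hk.1).2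
      (hint.mono_set (Icc_subset_Icc_right hk.2))
  rw [hftc t ht, hftc s hs, ← integral_interval_sub_left (hii t ht) (hii s hs)]
  ring

lemma ae_nonpos_of_antitoneOn_of_eq_add_integral (hmono : AntitoneOn y (Icc a b))
    (hint : IntegrableOn y' (Icc a b))
    (hftc : ∀ k ∈ Icc a b, y k = y a + ∫ t in a..k, y' t) :
    ∀ᵐ k, k ∈ Ioo a b → y' k ≤ 0 := by
  rcases le_or_gt b a with hba | hab
  · exact Eventually.of_forall fun k hk => absurd (hk.1.trans hk.2) (not_lt.2 hba)
  have hii : IntervalIntegrable y' volume a b :=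
    (intervalIntegrable_iff_integrableOn_Icc_of_le hab.le).2 hint
  filter_upwards [hii.ae_hasDerivAt_integral] with k hk hkI
  have hd := (hk (uIcc_of_le hab.le ▸ Ioo_subset_Icc_self hkI) a left_mem_uIcc).hasDerivWithinAt
    (s := Icc a b)
  refine hd.nonpos_of_antitoneOn ?_ fun s hs t ht hst => ?_
  · exact uniqueDiffWithinAt_iff_accPt.1 (uniqueDiffOn_Icc hab k (Ioo_subset_Icc_self hkI))
  · have := hmono hs ht hst
    rw [hftc s hs, hftc t ht] at this
    linarith

lemma mul_le_sub_of_ae_le_neg (hint : IntegrableOn y' (Icc a b))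
    (hftc : ∀ k ∈ Icc a b, y k = y a + ∫ t in a..k, y' t) {s t c : ℝ} (has : a ≤ s)
    (hst : s ≤ t) (htb : t ≤ b) (hc : ∀ᵐ u, u ∈ Ioo s t → c ≤ -y' u) :
    (t - s) * c ≤ y s - y t := by
  have hsub : Ioo s t ⊆ Icc a b := fun u hu => ⟨has.trans hu.1.le, hu.2.le.trans htb⟩
  have hy : y s - y t = ∫ u in Ioo s t, -y' u := by
    rw [MeasureTheory.integral_neg, ← integral_Ioc_eq_integral_Ioo,
      ← intervalIntegral.integral_of_le hst,
      ← sub_eq_integral_of_eq_add_integral hint hftc ⟨has, hst.trans htb⟩ ⟨has.trans hst, htb⟩]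
    ring
  rw [hy, ← Real.volume_real_Ioo_of_le hst, ← smul_eq_mul, ← setIntegral_const]
  refine setIntegral_mono_ae_restrict (integrableOn_const measure_Ioo_lt_top.ne)
    (hint.mono_set hsub).neg ?_
  rwa [EventuallyLE, ae_restrict_iff' measurableSet_Ioo]

end Primitive

section LevelSetODE

variable {L A a b : ℝ} {y y' : ℝ → ℝ}

lemma mul_rpow_one_div_le_sub (hA : 0 < A) (hL : 0 < L) (hmono : AntitoneOn y (Icc a b))
    (hnn : ∀ k ∈ Icc a b, 0 ≤ y k) (hint : IntegrableOn y' (Icc a b))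
    (hftc : ∀ k ∈ Icc a b, y k = y a + ∫ t in a..k, y' t)
    (hode : ∀ᵐ k, k ∈ Ioo a b → y k ≤ A * (-y' k) ^ L) {s t : ℝ} (has : a ≤ s) (hst : s ≤ t)
    (htb : t ≤ b) : (t - s) * (y t / A) ^ (1 / L) ≤ y s - y t := by
  have htI : t ∈ Icc a b := ⟨has.trans hst, htb⟩
  refine mul_le_sub_of_ae_le_neg hint hftc has hst htb ?_
  -- `hode` only bounds `-y'` where `-y' ≥ 0`: for a negative base `Real.rpow` is a junk value
  filter_upwards [hode, ae_nonpos_of_antitoneOn_of_eq_add_integral hmono hint hftc]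
    with u hode_u hsign_u hu
  have huI : u ∈ Ioo a b := ⟨has.trans_lt hu.1, hu.2.trans_le htb⟩
  calc (y t / A) ^ (1 / L) ≤ (y u / A) ^ (1 / L) := by
        gcongr
        · exact div_nonneg (hnn t htI) hA.le
        · exact hmono (Ioo_subset_Icc_self huI) htI hu.2.le
    _ ≤ -y' u := Real.rpow_one_div_le_of_le_mul_rpow hA hL (hnn u (Ioo_subset_Icc_self huI))
        (neg_nonneg.2 (hsign_u huI)) (hode_u huI)

lemma slope_rpow_le (hA : 0 < A) (hL : 1 < L) (hmono : AntitoneOn y (Icc a b))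
    (hnn : ∀ k ∈ Icc a b, 0 ≤ y k) (hint : IntegrableOn y' (Icc a b))
    (hftc : ∀ k ∈ Icc a b, y k = y a + ∫ t in a..k, y' t)
    (hode : ∀ᵐ k, k ∈ Ioo a b → y k ≤ A * (-y' k) ^ L) {s t : ℝ} (has : a ≤ s) (hst : s < t)
    (htb : t ≤ b) (hys : 0 < y s) :
    slope (fun k => y k ^ ((L - 1) / L)) s t ≤
      -((L - 1) / L * ((y t / A) ^ (1 / L) / y s ^ (1 / L))) := by
  have hL0 : 0 < L := by linarith
  have hdiss := mul_rpow_one_div_le_sub hA hL0 hmono hnn hint hftc hode has hst.le htb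
  have hconc := Real.mul_rpow_sub_one_mul_sub_le_rpow_sub_rpow (p := (L - 1) / L)
    (div_nonneg (by linarith) hL0.le) (div_le_one_of_le₀ (by linarith) hL0.le) hys
    (hnn t ⟨has.trans hst.le, htb⟩)
  have hexp : (L - 1) / L - 1 = -(1 / L) := by field_simp; ring
  rw [hexp, Real.rpow_neg hys.le] at hconc
  rw [slope_def_field, div_le_iff₀ (sub_pos.2 hst)]
  have hα : 0 ≤ (L - 1) / L * (y s ^ (1 / L))⁻¹ :=
    mul_nonneg (div_nonneg (by linarith) hL0.le) (by positivity)
  have hreorder : (L - 1) / L * ((y t / A) ^ (1 / L) / y s ^ (1 / L)) * (t - s) =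
      (L - 1) / L * (y s ^ (1 / L))⁻¹ * ((t - s) * (y t / A) ^ (1 / L)) := by ring
  linarith [mul_le_mul_of_nonneg_left hdiss hα]

lemma mul_sub_le_rpow_sub_rpow (hA : 0 < A) (hL : 1 < L) (hab : a ≤ b)
    (hmono : AntitoneOn y (Icc a b)) (hnn : ∀ k ∈ Icc a b, 0 ≤ y k)
    (hpos : ∀ k ∈ Ico a b, 0 < y k) (hint : IntegrableOn y' (Icc a b))
    (hftc : ∀ k ∈ Icc a b, y k = y a + ∫ t in a..k, y' t)
    (hode : ∀ᵐ k, k ∈ Ioo a b → y k ≤ A * (-y' k) ^ L) :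
    (L - 1) / L / A ^ (1 / L) * (b - a) ≤ y a ^ ((L - 1) / L) - y b ^ ((L - 1) / L) := by
  have hL0 : 0 < L := by linarith
  have hcont := continuousOn_of_eq_add_integral hab hint hftc
  refine mul_sub_le_sub_of_forall_eventually_slope_lt hab
    (hcont.rpow_const fun _ _ => Or.inr (div_nonneg (by linarith) hL0.le)) fun x hx r hr => ?_
  have hyx := hpos x hx
  have hIcc : Icc a b ∈ 𝓝[>] x := Icc_mem_nhdsGT_of_mem hx
  have hy : Tendsto y (𝓝[>] x) (𝓝 (y x)) :=
    (hcont x (Ico_subset_Icc_self hx)).mono_of_mem_nhdsWithin hIcc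
  have hbound : Tendsto (fun t => -((L - 1) / L * ((y t / A) ^ (1 / L) / y x ^ (1 / L))))
      (𝓝[>] x) (𝓝 (-((L - 1) / L / A ^ (1 / L)))) := by
    have hval : -((L - 1) / L * ((y x / A) ^ (1 / L) / y x ^ (1 / L))) =
        -((L - 1) / L / A ^ (1 / L)) := by
      rw [Real.div_rpow hyx.le hA.le]
      have : 0 < y x ^ (1 / L) := by positivity
      field_simp
    rw [← hval]
    refine ((((hy.div_const A).rpow_const ?_).div_const _).const_mul _).neg
    exact Or.inl (div_pos hyx hA).ne'
  filter_upwards [hbound.eventually (gt_mem_nhds hr), self_mem_nhdsWithin, hIcc]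
    with t hlt hxt htI
  exact (slope_rpow_le hA hL hmono hnn hint hftc hode hx.1 hxt htI.2 hyx).trans_lt hlt

end LevelSetODE

/-- **Level-set ODE lemma**: if `y : [0, K] → [0, ∞)` is nonincreasing, (locally) absolutely
continuous — encoded by an integrable a.e. derivative `y'` together with the fundamental
theorem of calculus — positive on `[0, K)`, and satisfies `y(k) ≤ A (−y′(k))^L` for a.e.
`k ∈ (0, K)` with `L > 1`, then `K ≤ (L/(L−1)) A^{1/L} y(0)^{(L−1)/L}`. -/
theorem level_set_ode (L A K : ℝ) (hL : 1 < L) (hA : 0 < A) (hK : 0 < K)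
    (y y' : ℝ → ℝ)
    (hmono : AntitoneOn y (Set.Icc 0 K))
    (hnn : ∀ k ∈ Set.Icc 0 K, 0 ≤ y k)
    (hpos : ∀ k : ℝ, 0 ≤ k → k < K → 0 < y k)
    (hint : IntegrableOn y' (Set.Icc 0 K))
    (hftc : ∀ k ∈ Set.Icc 0 K, y k = y 0 + ∫ t in (0 : ℝ)..k, y' t)
    (hode : ∀ᵐ k ∂(volume : Measure ℝ), k ∈ Set.Ioo 0 K → y k ≤ A * (-y' k) ^ L) :
    K ≤ L / (L - 1) * A ^ (1 / L) * y 0 ^ ((L - 1) / L) := by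
  have hdecay := mul_sub_le_rpow_sub_rpow hA hL hK.le hmono hnn (fun k hk => hpos k hk.1 hk.2)
    hint hftc hode
  have hyK : 0 ≤ y K ^ ((L - 1) / L) := Real.rpow_nonneg (hnn K ⟨hK.le, le_rfl⟩) _
  have hL1 : 0 < L - 1 := by linarith
  have hAL : 0 < A ^ (1 / L) := by positivity
  calc K = (L - 1) / L / A ^ (1 / L) * (K - 0) * (L / (L - 1) * A ^ (1 / L)) := by
        field_simp; ring
    _ ≤ y 0 ^ ((L - 1) / L) * (L / (L - 1) * A ^ (1 / L)) := by gcongr; linarith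
    _ = L / (L - 1) * A ^ (1 / L) * y 0 ^ ((L - 1) / L) := by ring
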